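/- arXiv:1403.3462 — 5 statements merged into one kernel-verified Lean document; each statement's English description precedes it below -/
import Mathlib

section
/- Let C be a finite set of complex numbers. If g₁ and g₂ are polyexponential functions (on the non-negative integers) with bases C, then their convolution g₁ * g₂ is again a polyexponential function with bases C. Moreover, the maximal degree of the polynomial coefficients of g₁ * g₂ is at most one plus the sum of the maximal degrees of the polynomial coefficients of g₁ and of g₂. -/
/-!
Convolution is bilinear, so it suffices to convolve two single terms `p(j) c^j` and
`q(j) c'^j`. For `c' ≠ 0`, put `t = c / c'` and expand `q(k - j)` by Taylor's formula in powers
of `-j`, with coefficients `(hasseDeriv m q)(k)` of degree `≤ deg q - m`: the convolution becomes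
`c'^k` times a combination of partial sums `∑_{j ≤ k} r(j) t^j` with `deg r ≤ deg p + m`.
Each such partial sum equals `A(k) t^k + β` with `deg A ≤ deg r + 1`, because the difference
equation `t A(x + 1) - A(x) = t r(x + 1)` has a solution of that degree: the operator
`A ↦ t A(x + 1) - A(x)` lowers degrees by at most one (exactly one when `t = 1`), so it can be
inverted by successively removing leading terms.
-/

/-- The convolution of two functions on the non-negative integers:
`(g₁ * g₂)(k) = Σ_{j=0}^{k} g₁(j) g₂(k−j)`. -/
noncomputable def conv (g₁ g₂ : ℕ → ℂ) (k : ℕ) : ℂ :=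
  ∑ j ∈ Finset.range (k + 1), g₁ j * g₂ (k - j)

/-- `g` is polyexponential with bases `C` whose polynomial coefficients all
have degree at most `D`. -/
def IsPolyexpOfDeg (C : Finset ℂ) (D : ℕ) (g : ℕ → ℂ) : Prop :=
  ∃ p : ℂ → Polynomial ℂ, (∀ c ∈ C, (p c).natDegree ≤ D) ∧
    ∀ k : ℕ, g k = ∑ c ∈ C, (p c).eval (k : ℂ) * c ^ k

open Polynomial Finset

namespace Polynomial

theorem eval_add_eq_sum_hasseDeriv {R : Type*} [CommRing R] (q : R[X]) (x y : R) :
    q.eval (x + y) = ∑ m ∈ range (q.natDegree + 1), (hasseDeriv m q).eval x * y ^ m := by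
  rw [← taylor_eval_sub (r := x), add_sub_cancel_left,
    eval_eq_sum_range' ((natDegree_taylor q x).trans_lt q.natDegree.lt_succ_self)]
  simp only [taylor_coeff]

variable {K : Type*} [Field K] [CharZero K]

theorem exists_smul_taylor_one_sub_sub_X_pow_degree_lt (t : K) (n : ℕ) :
    ∃ M : K[X], M.degree ≤ ↑(n + 1) ∧
      (t • taylor 1 M - M - X ^ n).degree < (n : WithBot ℕ) := by
  have coeff_eq (a : K) (e m : ℕ) :
      (t • taylor 1 (C a * X ^ e) - C a * X ^ e - X ^ n).coeff m =
        t * (a * e.choose m) - (if m = e then a else 0) - if m = n then 1 else 0 := by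
    simp only [taylor_mul, taylor_C, taylor_X_pow, map_one, coeff_sub, coeff_smul, coeff_C_mul,
      coeff_X_add_one_pow, coeff_X_pow, smul_eq_mul, mul_ite, mul_one, mul_zero]
  by_cases ht : t = 1
  · -- `(X + 1) ^ (n + 1) - X ^ (n + 1)` has leading term `(n + 1) X ^ n`
    refine ⟨C ((n : K) + 1)⁻¹ * X ^ (n + 1), degree_C_mul_X_pow_le _ _, ?_⟩
    refine (degree_lt_iff_coeff_zero _ _).mpr fun m hm => ?_
    have hn : (n : K) + 1 ≠ 0 := Nat.cast_add_one_ne_zero n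
    rw [coeff_eq, ht, one_mul]
    obtain rfl | hm := hm.eq_or_lt
    · simp [Nat.choose_succ_self_right, hn]
    obtain rfl | hm' := (Nat.succ_le_of_lt hm).eq_or_lt
    · simp
    · simp [Nat.choose_eq_zero_of_lt hm', hm.ne', hm'.ne']
  · refine ⟨C (t - 1)⁻¹ * X ^ n,
      (degree_C_mul_X_pow_le _ _).trans (by exact_mod_cast n.le_succ), ?_⟩
    refine (degree_lt_iff_coeff_zero _ _).mpr fun m hm => ?_
    have ht1 : t - 1 ≠ 0 := sub_ne_zero.mpr ht
    rw [coeff_eq]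
    obtain rfl | hm := hm.eq_or_lt
    · simp only [Nat.choose_self, Nat.cast_one, if_true]
      field_simp
      ring
    · simp [Nat.choose_eq_zero_of_lt hm, hm.ne']

theorem exists_smul_taylor_one_sub_eq_of_degree_lt (t : K) (n : ℕ) (R : K[X])
    (hR : R.degree < n) : ∃ A : K[X], A.degree ≤ n ∧ t • taylor 1 A - A = R := by
  induction n generalizing R with
  | zero =>
    refine ⟨0, by simp, ?_⟩
    rw [Nat.cast_zero, Nat.WithBot.lt_zero_iff, degree_eq_bot] at hR
    simp [hR]
  | succ n ih =>
    obtain ⟨M, hM_deg, hM⟩ := exists_smul_taylor_one_sub_sub_X_pow_degree_lt t n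
    set a := R.coeff n
    have h_rest : (R - a • (t • taylor 1 M - M)).degree < n := by
      refine (degree_lt_iff_coeff_zero _ _).mpr fun m hm => ?_
      have hTM := (degree_lt_iff_coeff_zero _ _).mp hM m hm
      rw [coeff_sub, coeff_X_pow, sub_eq_zero] at hTM
      rw [coeff_sub, coeff_smul, hTM, smul_eq_mul]
      obtain rfl | hm := hm.eq_or_lt
      · simp [a]
      · simp [hm.ne', (degree_lt_iff_coeff_zero _ _).mp hR m (by omega)]
    obtain ⟨A, hA_deg, hA⟩ := ih _ h_rest
    refine ⟨a • M + A, ?_, ?_⟩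
    · refine (degree_add_le _ _).trans (max_le ((degree_smul_le _ _).trans hM_deg) ?_)
      exact hA_deg.trans (by exact_mod_cast n.le_succ)
    · calc t • taylor 1 (a • M + A) - (a • M + A)
          = a • (t • taylor 1 M - M) + (t • taylor 1 A - A) := by
            simp only [map_add, map_smul]; module
        _ = R := by rw [hA]; abel

theorem exists_smul_taylor_one_sub_eq (t : K) (R : K[X]) {d : ℕ} (hR : R.natDegree ≤ d) :
    ∃ A : K[X], A.natDegree ≤ d + 1 ∧ t • taylor 1 A - A = R := by
  obtain ⟨A, hA_deg, hA⟩ := exists_smul_taylor_one_sub_eq_of_degree_lt t (d + 1) R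
    ((degree_le_of_natDegree_le hR).trans_lt (by exact_mod_cast d.lt_succ_self))
  exact ⟨A, natDegree_le_iff_degree_le.mpr hA_deg, hA⟩

theorem exists_sum_range_eval_mul_pow (t : K) (r : K[X]) {d : ℕ} (hr : r.natDegree ≤ d) :
    ∃ A : K[X], A.natDegree ≤ d + 1 ∧ ∃ β : K, ∀ k : ℕ,
      ∑ j ∈ range (k + 1), r.eval (j : K) * t ^ j = A.eval (k : K) * t ^ k + β := by
  obtain ⟨A, hA_deg, hA⟩ := exists_smul_taylor_one_sub_eq t (t • taylor 1 r)
    ((natDegree_smul_le _ _).trans ((natDegree_taylor r 1).trans_le hr))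
  refine ⟨A, hA_deg, r.eval 0 - A.eval 0, fun k => ?_⟩
  induction k with
  | zero => simp
  | succ k ih =>
    have h := congrArg (eval (k : K)) hA
    simp only [eval_sub, eval_smul, taylor_eval, smul_eq_mul] at h
    rw [sum_range_succ, ih]
    push_cast
    linear_combination -t ^ k * h

end Polynomial

theorem conv_sum_left {ι : Type*} (s : Finset ι) (f : ι → ℕ → ℂ) (g : ℕ → ℂ) :
    conv (fun j => ∑ i ∈ s, f i j) g = fun k => ∑ i ∈ s, conv (f i) g k := by
  ext k
  simp only [conv, sum_mul]
  exact sum_comm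

theorem conv_sum_right {ι : Type*} (s : Finset ι) (f : ℕ → ℂ) (g : ι → ℕ → ℂ) :
    conv f (fun j => ∑ i ∈ s, g i j) = fun k => ∑ i ∈ s, conv f (g i) k := by
  ext k
  simp only [conv, mul_sum]
  exact sum_comm

theorem conv_mul_zero_pow (f a : ℕ → ℂ) (k : ℕ) :
    conv f (fun j => a j * 0 ^ j) k = f k * a 0 := by
  rw [conv, sum_range_succ, sum_eq_zero fun j hj => ?_]
  · simp
  · simp [Nat.sub_ne_zero_of_lt (mem_range.mp hj)]

theorem conv_eval_mul_pow_eq_sum_hasseDeriv {c c' : ℂ} (hc' : c' ≠ 0) (p q : ℂ[X])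
    (k : ℕ) :
    conv (fun j => p.eval (j : ℂ) * c ^ j) (fun j => q.eval (j : ℂ) * c' ^ j) k =
      ∑ m ∈ range (q.natDegree + 1), (hasseDeriv m q).eval (k : ℂ) * c' ^ k *
        ∑ j ∈ range (k + 1), (p * (-X) ^ m).eval (j : ℂ) * (c / c') ^ j := by
  simp only [mul_sum]
  rw [conv, sum_comm]
  refine sum_congr rfl fun j hj => ?_
  have hjk : j ≤ k := Nat.lt_succ_iff.mp (mem_range.mp hj)
  rw [Nat.cast_sub hjk, sub_eq_add_neg, eval_add_eq_sum_hasseDeriv, sum_mul, mul_sum]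
  refine sum_congr rfl fun m _ => ?_
  simp only [eval_mul, eval_pow, eval_neg, eval_X, div_pow]
  rw [← pow_sub_mul_pow c' hjk]
  field_simp

namespace IsPolyexpOfDeg

variable {C : Finset ℂ} {D : ℕ}

theorem zero : IsPolyexpOfDeg C D fun _ => 0 :=
  ⟨0, by simp, by simp⟩

theorem add {f g : ℕ → ℂ} (hf : IsPolyexpOfDeg C D f) (hg : IsPolyexpOfDeg C D g) :
    IsPolyexpOfDeg C D fun k => f k + g k := by
  obtain ⟨p, hp_deg, hp⟩ := hf
  obtain ⟨q, hq_deg, hq⟩ := hg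
  refine ⟨p + q, fun c hc => (natDegree_add_le _ _).trans (max_le (hp_deg c hc) (hq_deg c hc)),
    fun k => ?_⟩
  simp only [hp, hq, Pi.add_apply, eval_add, add_mul, sum_add_distrib]

theorem sum {ι : Type*} (s : Finset ι) {f : ι → ℕ → ℂ}
    (h : ∀ i ∈ s, IsPolyexpOfDeg C D (f i)) :
    IsPolyexpOfDeg C D fun k => ∑ i ∈ s, f i k := by
  classical
  induction s using Finset.induction_on with
  | empty => simpa using zero
  | insert i s hi ih =>
    simp only [sum_insert hi]
    exact (h i (mem_insert_self i s)).add (ih fun j hj => h j (mem_insert_of_mem hj))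

theorem eval_mul_pow {c : ℂ} (hc : c ∈ C) {p : ℂ[X]} (hp : p.natDegree ≤ D) :
    IsPolyexpOfDeg C D fun k => p.eval (k : ℂ) * c ^ k := by
  classical
  refine ⟨fun c' => if c' = c then p else 0, fun c' _ => ?_, fun k => ?_⟩
  · dsimp only
    split_ifs <;> simp [hp]
  · simp [apply_ite, ite_mul, hc]

theorem conv_eval_mul_pow {c c' : ℂ} (hc : c ∈ C) (hc' : c' ∈ C) {p q : ℂ[X]}
    {D₁ D₂ : ℕ} (hp : p.natDegree ≤ D₁) (hq : q.natDegree ≤ D₂) :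
    IsPolyexpOfDeg C (D₁ + D₂ + 1)
      (conv (fun j => p.eval (j : ℂ) * c ^ j) (fun j => q.eval (j : ℂ) * c' ^ j)) := by
  by_cases hc'_zero : c' = 0
  · subst hc'_zero
    rw [show conv _ _ = fun k : ℕ => (q.eval 0 • p).eval (k : ℂ) * c ^ k from
      funext fun k => by rw [conv_mul_zero_pow, eval_smul, smul_eq_mul, Nat.cast_zero]; ring]
    exact eval_mul_pow hc ((natDegree_smul_le _ _).trans (by omega))
  choose A hA_deg β hβ using fun m : ℕ =>
    exists_sum_range_eval_mul_pow (c / c') (p * (-X) ^ m) (d := D₁ + m)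
      (natDegree_mul_le.trans (by simpa using hp))
  have h_conv : conv (fun j => p.eval (j : ℂ) * c ^ j) (fun j => q.eval (j : ℂ) * c' ^ j) =
      fun k : ℕ => ∑ m ∈ range (q.natDegree + 1),
        ((hasseDeriv m q * A m).eval (k : ℂ) * c ^ k +
          (β m • hasseDeriv m q).eval (k : ℂ) * c' ^ k) := by
    ext k
    rw [conv_eval_mul_pow_eq_sum_hasseDeriv hc'_zero]
    refine sum_congr rfl fun m _ => ?_
    rw [hβ, eval_mul, eval_smul, smul_eq_mul, div_pow]
    field_simp
  rw [h_conv]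
  refine sum _ fun m hm => (eval_mul_pow hc ?_).add (eval_mul_pow hc' ?_)
  all_goals
    have := mem_range.mp hm
    have := natDegree_hasseDeriv_le q m
  · exact natDegree_mul_le.trans (by have := hA_deg m; omega)
  · exact (natDegree_smul_le _ _).trans (by omega)

end IsPolyexpOfDeg

/-- The convolution of two polyexponential functions with bases `C` is again
polyexponential with bases `C`, and the maximal degree of the polynomial
coefficients of the convolution is at most one plus the sum of the maximal
degrees of the polynomial coefficients of the two factors. -/
theorem conv_polyexponential (C : Finset ℂ) (g₁ g₂ : ℕ → ℂ) (D₁ D₂ : ℕ)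
    (h₁ : IsPolyexpOfDeg C D₁ g₁) (h₂ : IsPolyexpOfDeg C D₂ g₂) :
    IsPolyexpOfDeg C (D₁ + D₂ + 1) (conv g₁ g₂) := by
  obtain ⟨p, hp_deg, hg₁⟩ := h₁
  obtain ⟨q, hq_deg, hg₂⟩ := h₂
  rw [funext hg₁, funext hg₂, conv_sum_left]
  simp only [conv_sum_right]
  exact .sum C fun c hc => .sum C fun c' hc' =>
    .conv_eval_mul_pow hc hc' (hp_deg c hc) (hq_deg c' hc')
end

section
/- Let M be an r×r matrix with complex entries, let t be a positive integer, and fix 2t indices b₁, …, b_{2t} ∈ {1, …, r}. For a non-negative integer k define f(k) = Σ (M^{k₁})_{b₁,b₂} (M^{k₂})_{b₃,b₄} ··· (M^{k_t})_{b_{2t−1},b_{2t}}, summed over all t-tuples of non-negative integers (k₁, …, k_t) with k₁ + ··· + k_t = k. Then there exist an integer K ≥ 0 and, for each eigenvalue ν of M, a polynomial p_ν with complex coefficients, such that f(k) = Σ_{ν ∈ Spec(M)} ν^k p_ν(k) for all k ≥ K. Moreover, if M is diagonalizable, then the polynomials p_ν can be taken of degree at most t. -/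
open scoped Classical

/-- `walkSum M t b k = Σ_{k₁+···+k_t = k} (M^{k₁})_{b₁,b₂} ··· (M^{k_t})_{b_{2t−1},b_{2t}}`,
where the pair `b i` records the indices `(b_{2i−1}, b_{2i})`. -/
noncomputable def walkSum {r : ℕ} (M : Matrix (Fin r) (Fin r) ℂ) (t : ℕ)
    (b : Fin t → Fin r × Fin r) (k : ℕ) : ℂ :=
  ∑ v ∈ Finset.Nat.antidiagonalTuple t k, ∏ i, (M ^ v i) (b i).1 (b i).2

/-- `M` is diagonalizable: `M = P D P⁻¹` with `P` invertible and `D` diagonal. -/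
def Matrix.Diagonalizable {r : ℕ} (M : Matrix (Fin r) (Fin r) ℂ) : Prop :=
  ∃ P D : Matrix (Fin r) (Fin r) ℂ, IsUnit P.det ∧ D.IsDiag ∧ M = P * D * P⁻¹

/-!
The generating function `∑ₖ (M ^ k) a b Xᵏ` is the entry `adj(1 - XM) a b / det(1 - XM)` of
`(1 - XM)⁻¹`, and `det(1 - XM) = ∏ (1 - νX)` over the eigenvalues `ν` of `M`, so it lies in
the span of the polynomials and the powers `(1 - νX)⁻ʲ`. Because
`(μ - ν) / ((1 - μX)(1 - νX)) = μ / (1 - μX) - ν / (1 - νX)`, these spans, graded by the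
largest exponent `j`, are closed under multiplication; the generating function of `walkSum` is
a product of `t` entries and so lies in such a span. Finally the `n`-th coefficient of
`(1 - νX)^{-(j+1)}` is `(j + n).choose j * ν ^ n`, a polynomial of degree `j` in `n` times
`ν ^ n`. For diagonalizable `M` every entry is a combination of the `(1 - νX)⁻¹`, which bounds
the degrees by `t`.
-/

open scoped Polynomial PowerSeries

theorem Polynomial.exists_eval_natCast_eq_choose {K : Type*} [Field K] [CharZero K] (j : ℕ) :
    ∃ Q : K[X], Q.natDegree ≤ j ∧ ∀ n : ℕ, Q.eval (n : K) = (j + n).choose j := by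
  refine ⟨C (j.factorial : K)⁻¹ * (ascPochhammer K j).comp (X + 1), ?_, fun n => ?_⟩
  · refine (natDegree_C_mul_le _ _).trans (natDegree_comp_le.trans ?_)
    rw [ascPochhammer_natDegree, ← C_1, natDegree_X_add_C, mul_one]
  · have h := ascPochhammer_nat_eq_natCast_ascFactorial K (n + 1) j
    rw [Nat.ascFactorial_eq_factorial_mul_choose] at h
    push_cast at h
    simp [h, add_comm j n, Nat.factorial_ne_zero]

theorem Polynomial.reverse_multiset_prod_X_sub_C {R : Type*} [CommRing R] [IsDomain R]
    (s : Multiset R) :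
    ((s.map fun μ => X - C μ).prod).reverse = (s.map fun μ => 1 - C μ * X).prod := by
  have h1 : (1 : R[X]).reverse = 1 := by simpa using reverse_C (1 : R)
  have hX : (X : R[X]).reverse = 1 := by simpa [h1] using reverse_X_mul (1 : R[X])
  induction s using Multiset.induction_on with
  | empty => simpa using h1
  | cons μ s ih =>
    rw [Multiset.map_cons, Multiset.prod_cons, reverse_mul_of_domain, ih, Multiset.map_cons,
      Multiset.prod_cons, sub_eq_add_neg, ← C_neg, reverse_add_C, hX]
    simp [sub_eq_add_neg]

namespace PowerSeries

section CommRing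

variable {R : Type*} [CommRing R]

noncomputable def geom (μ : R) : R⟦X⟧ := rescale μ (mk 1)

@[simp]
theorem coeff_geom (μ : R) (n : ℕ) : coeff n (geom μ) = μ ^ n := by
  simp [geom, coeff_rescale]

theorem coeff_geom_pow_succ (μ : R) (j n : ℕ) :
    coeff n (geom μ ^ (j + 1)) = (j + n).choose j * μ ^ n := by
  rw [geom, ← map_pow, mk_one_pow_eq_mk_choose_add, coeff_rescale, coeff_mk, mul_comm]

@[simp]
theorem geom_zero : geom (0 : R) = 1 := by
  simp [geom, rescale_zero]

theorem geom_mul_one_sub (μ : R) : geom μ * (1 - C μ * X) = 1 := by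
  rw [geom, ← rescale_X, ← map_one (rescale μ), ← map_sub, ← map_mul,
    mk_one_mul_one_sub_eq_one, map_one]

theorem C_mul_X_mul_geom (μ : R) : C μ * X * geom μ = geom μ - 1 := by
  linear_combination -geom_mul_one_sub μ

theorem C_sub_mul_geom_mul_geom (μ ν : R) :
    C (μ - ν) * (geom μ * geom ν) = C μ * geom μ - C ν * geom ν := by
  rw [map_sub]
  linear_combination (C μ * geom μ) * geom_mul_one_sub ν - (C ν * geom ν) * geom_mul_one_sub μ

end CommRing

section Field

variable {K : Type*} [Field K] {S : Finset K} {m n : ℕ}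

/-- The rational power series whose denominator divides a product of factors `(1 - μX) ^ m`
with `μ ∈ S`, presented through their partial fraction decomposition. -/
noncomputable def geomSpan (S : Finset K) (m : ℕ) : Submodule K K⟦X⟧ :=
  Submodule.span K {φ | (∃ a, φ = X ^ a) ∨ ∃ μ ∈ S, ∃ j ≤ m, φ = geom μ ^ j}

theorem X_pow_mem_geomSpan (a : ℕ) : (X : K⟦X⟧) ^ a ∈ geomSpan S m :=
  Submodule.subset_span (Or.inl ⟨a, rfl⟩)

theorem geom_pow_mem_geomSpan {μ : K} (hμ : μ ∈ S) {j : ℕ} (hj : j ≤ m) :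
    geom μ ^ j ∈ geomSpan S m :=
  Submodule.subset_span (Or.inr ⟨μ, hμ, j, hj, rfl⟩)

theorem coe_mem_geomSpan (P : K[X]) : (P : K⟦X⟧) ∈ geomSpan S m := by
  induction P using Polynomial.induction_on' with
  | add p q hp hq => rw [Polynomial.coe_add]; exact Submodule.add_mem _ hp hq
  | monomial a c =>
    rw [Polynomial.coe_monomial, monomial_eq_C_mul_X_pow, ← smul_eq_C_mul]
    exact Submodule.smul_mem _ c (X_pow_mem_geomSpan a)

theorem geomSpan_mono (h : m ≤ n) : geomSpan S m ≤ geomSpan S n := by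
  refine Submodule.span_mono ?_
  rintro φ (hφ | ⟨μ, hμ, j, hj, rfl⟩)
  · exact Or.inl hφ
  · exact Or.inr ⟨μ, hμ, j, hj.trans h, rfl⟩

theorem X_mul_geom_pow_mem_geomSpan {μ : K} (hμ : μ ∈ S) {j : ℕ} (hj : j ≤ m) :
    X * geom μ ^ j ∈ geomSpan S m := by
  rcases j with _ | j
  · simpa using X_pow_mem_geomSpan 1
  by_cases hμ0 : μ = 0
  · simpa [hμ0] using X_pow_mem_geomSpan 1
  have hinv : C μ⁻¹ * C μ = 1 := by rw [← map_mul, inv_mul_cancel₀ hμ0, map_one]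
  have h : X * geom μ ^ (j + 1) = μ⁻¹ • (geom μ ^ (j + 1) - geom μ ^ j) := by
    rw [smul_eq_C_mul]
    linear_combination
      (C μ⁻¹ * geom μ ^ j) * C_mul_X_mul_geom μ - X * geom μ ^ (j + 1) * hinv
  rw [h]
  exact Submodule.smul_mem _ _
    (Submodule.sub_mem _ (geom_pow_mem_geomSpan hμ hj) (geom_pow_mem_geomSpan hμ (by omega)))

theorem X_mul_mem_geomSpan {φ : K⟦X⟧} (hφ : φ ∈ geomSpan S m) :
    X * φ ∈ geomSpan S m := by
  induction hφ using Submodule.span_induction with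
  | mem φ hφ =>
    rcases hφ with ⟨a, rfl⟩ | ⟨μ, hμ, j, hj, rfl⟩
    · rw [← pow_succ']
      exact X_pow_mem_geomSpan _
    · exact X_mul_geom_pow_mem_geomSpan hμ hj
  | zero => simp
  | add φ ψ _ _ hφ hψ => rw [mul_add]; exact Submodule.add_mem _ hφ hψ
  | smul c φ _ hφ => rw [mul_smul_comm]; exact Submodule.smul_mem _ c hφ

theorem X_pow_mul_mem_geomSpan (a : ℕ) {φ : K⟦X⟧} (hφ : φ ∈ geomSpan S m) :
    X ^ a * φ ∈ geomSpan S m := by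
  induction a with
  | zero => simpa using hφ
  | succ a ih => rw [pow_succ', mul_assoc]; exact X_mul_mem_geomSpan ih

theorem geom_pow_mul_geom_pow_mem_geomSpan {μ ν : K} (hμ : μ ∈ S) (hν : ν ∈ S)
    (i j : ℕ) :
    geom μ ^ i * geom ν ^ j ∈ geomSpan S (i + j) := by
  by_cases hμν : μ = ν
  · rw [hμν, ← pow_add]
    exact geom_pow_mem_geomSpan hν le_rfl
  have hinv : C (μ - ν)⁻¹ * C (μ - ν) = 1 := by
    rw [← map_mul, inv_mul_cancel₀ (sub_ne_zero.mpr hμν), map_one]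
  induction i generalizing j with
  | zero => simpa using geom_pow_mem_geomSpan hν le_rfl
  | succ i ih =>
    induction j with
    | zero => simpa using geom_pow_mem_geomSpan hμ le_rfl
    | succ j ihj =>
      have h : geom μ ^ (i + 1) * geom ν ^ (j + 1) =
          (μ - ν)⁻¹ • (μ • (geom μ ^ (i + 1) * geom ν ^ j) -
            ν • (geom μ ^ i * geom ν ^ (j + 1))) := by
        simp only [smul_eq_C_mul]
        linear_combination (C (μ - ν)⁻¹ * geom μ ^ i * geom ν ^ j) *
          C_sub_mul_geom_mul_geom μ ν - geom μ ^ (i + 1) * geom ν ^ (j + 1) * hinv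
      rw [h]
      refine Submodule.smul_mem _ _ (Submodule.sub_mem _ (Submodule.smul_mem _ _ ?_)
        (Submodule.smul_mem _ _ ?_))
      · exact geomSpan_mono (by omega) ihj
      · exact geomSpan_mono (by omega) (ih (j + 1))

theorem geomSpan_mul_le : geomSpan S m * geomSpan S n ≤ geomSpan S (m + n) := by
  rw [geomSpan, geomSpan, Submodule.span_mul_span, Submodule.span_le]
  rintro _ ⟨φ, hφ, ψ, hψ, rfl⟩
  rcases hφ with ⟨a, rfl⟩ | ⟨μ, hμ, i, hi, rfl⟩
  · exact X_pow_mul_mem_geomSpan a (geomSpan_mono (by omega) (Submodule.subset_span hψ))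
  rcases hψ with ⟨b, rfl⟩ | ⟨ν, hν, j, hj, rfl⟩
  · show _ * _ ∈ geomSpan S (m + n)
    rw [mul_comm]
    exact X_pow_mul_mem_geomSpan b (geomSpan_mono (by omega) (geom_pow_mem_geomSpan hμ hi))
  · exact geomSpan_mono (by omega) (geom_pow_mul_geom_pow_mem_geomSpan hμ hν i j)

instance (S : Finset K) : SetLike.GradedMonoid (geomSpan S) where
  one_mem := by simpa using X_pow_mem_geomSpan (S := S) (m := 0) 0
  mul_mem _ _ _ _ hφ hψ := geomSpan_mul_le (Submodule.mul_mem_mul hφ hψ)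

theorem multiset_prod_map_geom_mem_geomSpan (s : Multiset K) (hs : ∀ μ ∈ s, μ ∈ S) :
    (s.map geom).prod ∈ geomSpan S (Multiset.card s) := by
  induction s using Multiset.induction_on with
  | empty => simpa using X_pow_mem_geomSpan (S := S) (m := 0) 0
  | cons μ s ih =>
    rw [Multiset.map_cons, Multiset.prod_cons, Multiset.card_cons, add_comm]
    refine SetLike.mul_mem_graded ?_ (ih fun ν hν => hs ν (Multiset.mem_cons_of_mem hν))
    simpa using geom_pow_mem_geomSpan (hs μ (Multiset.mem_cons_self μ s)) (le_refl 1)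

noncomputable def eventuallyExpPoly (S : Finset K) (d : ℕ) : Submodule K K⟦X⟧ where
  carrier := {φ | ∃ p : K → K[X], (∀ μ, (p μ).natDegree ≤ d) ∧
    ∀ᶠ n in Filter.atTop, coeff n φ = ∑ μ ∈ S, (p μ).eval (n : K) * μ ^ n}
  zero_mem' := ⟨0, fun _ => by simp, .of_forall fun n => by simp⟩
  add_mem' := by
    rintro φ ψ ⟨p, hp, hφ⟩ ⟨q, hq, hψ⟩
    refine ⟨p + q,
      fun μ => (Polynomial.natDegree_add_le _ _).trans (max_le (hp μ) (hq μ)), ?_⟩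
    filter_upwards [hφ, hψ] with n hφn hψn
    simp [hφn, hψn, add_mul, Finset.sum_add_distrib]
  smul_mem' := by
    rintro c φ ⟨p, hp, hφ⟩
    refine ⟨fun μ => Polynomial.C c * p μ,
      fun μ => (Polynomial.natDegree_C_mul_le _ _).trans (hp μ), ?_⟩
    filter_upwards [hφ] with n hφn
    simp [hφn, Finset.mul_sum, mul_assoc]

theorem geomSpan_le_eventuallyExpPoly [CharZero K] :
    geomSpan S m ≤ eventuallyExpPoly S m := by
  have hX (a : ℕ) : (X : K⟦X⟧) ^ a ∈ eventuallyExpPoly S m := by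
    refine ⟨0, fun _ => by simp, ?_⟩
    filter_upwards [Filter.eventually_gt_atTop a] with n hn
    simp [coeff_X_pow, hn.ne']
  rw [geomSpan, Submodule.span_le]
  rintro φ (⟨a, rfl⟩ | ⟨μ, hμ, _ | j, hj, rfl⟩)
  · exact hX a
  · simpa using hX 0
  obtain ⟨Q, hQ, hQeval⟩ := Polynomial.exists_eval_natCast_eq_choose (K := K) j
  refine ⟨fun ν => if ν = μ then Q else 0, fun ν => ?_, .of_forall fun n => ?_⟩
  · dsimp only
    split_ifs
    · exact hQ.trans (by omega)
    · simp
  · simp only [coeff_geom_pow_succ, apply_ite (Polynomial.eval (n : K)), Polynomial.eval_zero,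
      ite_mul, zero_mul, Finset.sum_ite_eq', if_pos hμ, hQeval]

end Field

end PowerSeries

namespace Matrix

open Polynomial PowerSeries

variable {n : Type*} [Fintype n] [DecidableEq n]

section CommRing

variable {R : Type*} [CommRing R]

theorem det_smul_eq_adjugate_of_mul_eq_one {A B : Matrix n n R}
    (h : A * B = 1) : A.det • B = A.adjugate := by
  rw [← Matrix.one_mul B, ← smul_mul, ← adjugate_mul, Matrix.mul_assoc, h, Matrix.mul_one]

noncomputable def powSeries (M : Matrix n n R) : Matrix n n R⟦X⟧ :=
  of fun a b => PowerSeries.mk fun k => (M ^ k) a b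

theorem powSeries_eq_one_add (M : Matrix n n R) :
    M.powSeries = 1 + (PowerSeries.X : R⟦X⟧) • (M.map PowerSeries.C * M.powSeries) := by
  ext a b k
  rcases k with _ | k
  · simp [powSeries, one_apply]
  · simp [powSeries, one_apply, mul_apply, pow_succ', coeff_succ_X_mul, apply_ite (PowerSeries.coeff (k + 1))]

theorem one_sub_X_smul_mul_powSeries (M : Matrix n n R) :
    (1 - (PowerSeries.X : R⟦X⟧) • M.map PowerSeries.C) * M.powSeries = 1 := by
  rw [Matrix.sub_mul, Matrix.one_mul, smul_mul, sub_eq_iff_eq_add, ← powSeries_eq_one_add]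

end CommRing

variable {K : Type*} [Field K]

theorem charpolyRev_eq_prod_roots {M : Matrix n n K} (hM : M.charpoly.Splits) :
    M.charpolyRev = (M.charpoly.roots.map fun μ => 1 - Polynomial.C μ * Polynomial.X).prod := by
  rw [← reverse_charpoly, ← reverse_multiset_prod_X_sub_C,
    ← hM.eq_prod_roots_of_monic M.charpoly_monic]

theorem powSeries_apply_mem_geomSpan {M : Matrix n n K} (hM : M.charpoly.Splits) (a b : n) :
    M.powSeries a b ∈ geomSpan M.charpoly.roots.toFinset (Fintype.card n) := by
  set A : Matrix n n K[X] := 1 - (Polynomial.X : K[X]) • M.map Polynomial.C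
  set ι := Polynomial.coeToPowerSeries.ringHom (R := K)
  have hA : ι.mapMatrix A = 1 - (PowerSeries.X : K⟦X⟧) • M.map PowerSeries.C := by
    ext i j : 1
    by_cases hij : i = j <;> simp [A, ι, hij, mul_comm _ (PowerSeries.X : K⟦X⟧)]
  have hdet : ι A.det =
      (M.charpoly.roots.map fun μ => 1 - PowerSeries.C μ * PowerSeries.X).prod := by
    rw [show A.det = M.charpolyRev from rfl, charpolyRev_eq_prod_roots hM, map_multiset_prod,
      Multiset.map_map]
    simp [ι, Function.comp_def]
  have hadj : ι A.det * M.powSeries a b = ι (A.adjugate a b) := by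
    have h := det_smul_eq_adjugate_of_mul_eq_one (hA ▸ one_sub_X_smul_mul_powSeries M)
    rw [← RingHom.map_det, ← RingHom.map_adjugate] at h
    simpa using congrFun (congrFun h a) b
  have hinv : (M.charpoly.roots.map geom).prod * ι A.det = 1 := by
    rw [hdet, ← Multiset.prod_map_mul]
    simp [geom_mul_one_sub]
  have hcard : Multiset.card M.charpoly.roots + 0 = Fintype.card n :=
    (splits_iff_card_roots.mp hM).trans (charpoly_natDegree_eq_dim M)
  have hfactor : M.powSeries a b = (M.charpoly.roots.map geom).prod * ι (A.adjugate a b) := by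
    rw [← hadj, ← mul_assoc, hinv, one_mul]
  rw [hfactor, ← hcard]
  exact SetLike.mul_mem_graded
    (multiset_prod_map_geom_mem_geomSpan _ fun μ => Multiset.mem_toFinset.mpr) (coe_mem_geomSpan _)

theorem powSeries_apply_mem_geomSpan_one_of_eq_conj_diagonal {M P : Matrix n n K} {d : n → K}
    (hP : IsUnit P.det) (hM : M = P * diagonal d * P⁻¹) (a b : n) :
    M.powSeries a b ∈ geomSpan M.charpoly.roots.toFinset 1 := by
  have hroot (j : n) : d j ∈ M.charpoly.roots.toFinset := by
    have hchar : M.charpoly = (diagonal d).charpoly := by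
      rw [hM]
      exact charpoly_units_conj (P.nonsingInvUnit hP) _
    rw [Multiset.mem_toFinset, mem_roots M.charpoly_monic.ne_zero, hchar, charpoly_diagonal,
      IsRoot, eval_prod]
    exact Finset.prod_eq_zero (Finset.mem_univ j) (by simp)
  have hpow (k : ℕ) : M ^ k = P * diagonal (d ^ k) * P⁻¹ := by
    have hconj : M = (P.nonsingInvUnit hP).val * diagonal d * (P.nonsingInvUnit hP)⁻¹.val := hM
    rw [hconj, Units.conj_pow, diagonal_pow]
    rfl
  have hseries : M.powSeries a b = ∑ j, (P a j * P⁻¹ j b) • geom (d j) := by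
    ext k
    rw [powSeries, of_apply, coeff_mk, hpow, mul_apply]
    simp [mul_right_comm]
  rw [hseries]
  exact Submodule.sum_mem _ fun j _ => Submodule.smul_mem _ _
    (by simpa using geom_pow_mem_geomSpan (hroot j) (le_refl 1))

end Matrix

theorem Matrix.Diagonalizable.powSeries_apply_mem_geomSpan_one {r : ℕ}
    {M : Matrix (Fin r) (Fin r) ℂ} (hM : M.Diagonalizable) (a b : Fin r) :
    M.powSeries a b ∈ PowerSeries.geomSpan M.charpoly.roots.toFinset 1 := by
  obtain ⟨P, D, hP, hD, hMPD⟩ := hM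
  exact powSeries_apply_mem_geomSpan_one_of_eq_conj_diagonal hP (by rwa [hD.diagonal_diag]) a b

theorem walkSum_eq_coeff_prod {r : ℕ} (M : Matrix (Fin r) (Fin r) ℂ) (t : ℕ)
    (b : Fin t → Fin r × Fin r) (k : ℕ) :
    walkSum M t b k = PowerSeries.coeff k (∏ i, M.powSeries (b i).1 (b i).2) := by
  rw [PowerSeries.coeff_prod, Finset.finsuppAntidiag, Finset.sum_map, walkSum,
    ← Finset.piAntidiag_univ_fin_eq_antidiagonalTuple]
  simp only [Matrix.powSeries, Matrix.of_apply, PowerSeries.coeff_mk]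
  exact (Finset.sum_attach _ fun v : Fin t → ℕ => ∏ i, (M ^ v i) (b i).1 (b i).2).symm

theorem exists_walkSum_eq_of_powSeries_mem_geomSpan {r t : ℕ} {M : Matrix (Fin r) (Fin r) ℂ}
    (b : Fin t → Fin r × Fin r) {d : ℕ}
    (hd : ∀ a b, M.powSeries a b ∈ PowerSeries.geomSpan M.charpoly.roots.toFinset d) :
    ∃ (K : ℕ) (p : ℂ → Polynomial ℂ), (∀ ν, (p ν).natDegree ≤ t * d) ∧
      ∀ k, K ≤ k →
        walkSum M t b k = ∑ ν ∈ M.charpoly.roots.toFinset, (p ν).eval (k : ℂ) * ν ^ k := by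
  have hprod := SetLike.prod_mem_graded (PowerSeries.geomSpan M.charpoly.roots.toFinset)
    (fun _ => d) (fun i => M.powSeries (b i).1 (b i).2) (F := Finset.univ) fun i _ => hd _ _
  rw [Finset.sum_const, Finset.card_univ, Fintype.card_fin, smul_eq_mul] at hprod
  obtain ⟨p, hdeg, hp⟩ := PowerSeries.geomSpan_le_eventuallyExpPoly hprod
  obtain ⟨K, hK⟩ := Filter.eventually_atTop.mp hp
  exact ⟨K, p, hdeg, fun k hk => (walkSum_eq_coeff_prod M t b k).trans (hK k hk)⟩

theorem matrix_entry_sum_general (r t : ℕ) (M : Matrix (Fin r) (Fin r) ℂ)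
    (b : Fin t → Fin r × Fin r) :
    ∃ (K : ℕ) (p : ℂ → Polynomial ℂ),
      (M.Diagonalizable → ∀ ν : ℂ, (p ν).natDegree ≤ t) ∧
      ∀ k : ℕ, K ≤ k →
        walkSum M t b k
          = ∑ ν ∈ M.charpoly.roots.toFinset, (p ν).eval (k : ℂ) * ν ^ k := by
  by_cases hM : M.Diagonalizable
  · obtain ⟨K, p, hdeg, hK⟩ :=
      exists_walkSum_eq_of_powSeries_mem_geomSpan b hM.powSeries_apply_mem_geomSpan_one
    exact ⟨K, p, fun _ ν => by simpa using hdeg ν, hK⟩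
  · obtain ⟨K, p, -, hK⟩ := exists_walkSum_eq_of_powSeries_mem_geomSpan b
      (Matrix.powSeries_apply_mem_geomSpan (IsAlgClosed.splits _))
    exact ⟨K, p, fun h => absurd h hM, hK⟩

/-- There are `K ≥ 0` and polynomials `p_ν`, one for each eigenvalue `ν` of `M`
(the roots of its characteristic polynomial), such that for all `k ≥ K`,
`walkSum M t b k = Σ_{ν ∈ Spec(M)} ν^k p_ν(k)`.  Moreover, if `M` is diagonalizable,
the polynomials `p_ν` can be taken of degree at most `t`. -/
theorem matrix_entry_sum (r t : ℕ) (ht : 0 < t) (M : Matrix (Fin r) (Fin r) ℂ)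
    (b : Fin t → Fin r × Fin r) :
    ∃ (K : ℕ) (p : ℂ → Polynomial ℂ),
      (M.Diagonalizable → ∀ ν : ℂ, (p ν).natDegree ≤ t) ∧
      ∀ k : ℕ, K ≤ k →
        walkSum M t b k
          = ∑ ν ∈ M.charpoly.roots.toFinset, (p ν).eval (k : ℂ) * ν ^ k :=
  matrix_entry_sum_general r t M b
end

section
/- Let (P₁, ≤₁) and (P₂, ≤₂) be finitely certifiable partially ordered sets. Then their product P₁ × P₂, with the componentwise partial order (p₁,p₂) ≤ (q₁,q₂) iff p₁ ≤₁ q₁ and p₂ ≤₂ q₂, is finitely certifiable. -/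
/-- A poset has maximums (least upper bounds of pairs, in the sense of cones) if for
any two elements `p, q` there is `m` with `Cone(p) ∩ Cone(q) = Cone(m)`. -/
def HasMaximums (P : Type*) [PartialOrder P] : Prop :=
  ∀ p q : P, ∃ m : P, Set.Ici p ∩ Set.Ici q = Set.Ici m

/-- A poset is Noetherian if every increasing sequence of upper sets stabilizes. -/
def NoetherianPoset (P : Type*) [PartialOrder P] : Prop :=
  ∀ Q : ℕ → Set P, (∀ n, IsUpperSet (Q n)) → (∀ n, Q n ⊆ Q (n + 1)) →
    ∃ N : ℕ, ∀ i j : ℕ, N ≤ i → N ≤ j → Q i = Q j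

/-- A poset is finitely certifiable if it has maximums and is Noetherian. -/
def FinitelyCertifiable (P : Type*) [PartialOrder P] : Prop :=
  HasMaximums P ∧ NoetherianPoset P

/-!
Maximums in the product are taken componentwise. A poset is Noetherian exactly when it is
well-quasi-ordered, and a product of two well-quasi-orders is again one.
-/

theorem HasMaximums.prod {P₁ P₂ : Type*} [PartialOrder P₁] [PartialOrder P₂]
    (h₁ : HasMaximums P₁) (h₂ : HasMaximums P₂) : HasMaximums (P₁ × P₂) := by
  rintro ⟨p₁, p₂⟩ ⟨q₁, q₂⟩
  obtain ⟨m₁, hm₁⟩ := h₁ p₁ q₁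
  obtain ⟨m₂, hm₂⟩ := h₂ p₂ q₂
  refine ⟨(m₁, m₂), ?_⟩
  rw [← Set.Ici_prod_Ici, ← Set.Ici_prod_Ici, ← Set.Ici_prod_Ici, Set.prod_inter_prod, hm₁, hm₂]

section

variable {P : Type*} [PartialOrder P]

/-- A bad sequence `f` would give the strictly increasing chain of upper closures of
`f 0, …, f (n - 1)`. -/
theorem NoetherianPoset.wellQuasiOrderedLE (h : NoetherianPoset P) : WellQuasiOrderedLE P := by
  refine ⟨fun f => ?_⟩
  let Q : ℕ → Set P := fun n => upperClosure (f '' Set.Iio n)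
  have hQ_upper : ∀ n, IsUpperSet (Q n) := fun n => (upperClosure _).upper
  have hQ_mono : ∀ n, Q n ⊆ Q (n + 1) := fun n =>
    upperClosure_anti (Set.image_mono (Set.Iio_subset_Iio n.le_succ))
  obtain ⟨N, hN⟩ := h Q hQ_upper hQ_mono
  have hfN : f N ∈ Q (N + 1) := subset_upperClosure ⟨N, Nat.lt_succ_self N, rfl⟩
  rw [hN (N + 1) N N.le_succ le_rfl] at hfN
  obtain ⟨_, ⟨m, hm, rfl⟩, hle⟩ := mem_upperClosure.1 hfN
  exact ⟨m, N, hm, hle⟩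

/-- The union of the chain is generated by its minimal elements, which form a finite antichain;
the chain stabilizes once it contains all of them. -/
theorem NoetherianPoset.of_wellQuasiOrderedLE [WellQuasiOrderedLE P] : NoetherianPoset P := by
  intro Q hQ_upper hQ_succ
  have hQ_mono : Monotone Q := monotone_nat_of_le_succ hQ_succ
  let U := ⋃ n, Q n
  let M := {x | Minimal (· ∈ U) x}
  have hM_finite : M.Finite :=
    WellQuasiOrderedLE.finite_of_isAntichain (setOfPred_minimal_antichain _)
  choose! g hg using fun x (hx : x ∈ M) => Set.mem_iUnion.1 hx.prop
  obtain ⟨N, hN⟩ := (hM_finite.image g).bddAbove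
  have hQ_eq : ∀ i, N ≤ i → Q i = U := fun i hi =>
    (Set.subset_iUnion Q i).antisymm fun x hx => by
      obtain ⟨m, hmx, hm⟩ := (Set.isPWO_of_wellQuasiOrderedLE U).exists_le_minimal hx
      exact hQ_upper i hmx (hQ_mono ((hN ⟨m, hm, rfl⟩).trans hi) (hg m hm))
  exact ⟨N, fun i j hi hj => (hQ_eq i hi).trans (hQ_eq j hj).symm⟩

end

theorem NoetherianPoset.prod {P₁ P₂ : Type*} [PartialOrder P₁] [PartialOrder P₂]
    (h₁ : NoetherianPoset P₁) (h₂ : NoetherianPoset P₂) : NoetherianPoset (P₁ × P₂) :=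
  have := h₁.wellQuasiOrderedLE
  have := h₂.wellQuasiOrderedLE
  of_wellQuasiOrderedLE

/-- The product of two finitely certifiable posets, with the componentwise partial
order, is finitely certifiable. -/
theorem prod_finitelyCertifiable (P₁ P₂ : Type*) [PartialOrder P₁] [PartialOrder P₂]
    (h₁ : FinitelyCertifiable P₁) (h₂ : FinitelyCertifiable P₂) :
    FinitelyCertifiable (P₁ × P₂) :=
  ⟨h₁.1.prod h₂.1, h₁.2.prod h₂.2⟩
end

section
/- Let (P, ≤) be a countable, finitely certifiable partially ordered set. Then there exists a function μ : P → ℤ that is zero at all but finitely many elements of P such that, for every f : P → ℂ with Σ_{p∈P} |f(p)| < ∞, one has Σ_{p∈P} f(p) = Σ_{p∈P} μ(p) f̂(p), where f̂(p) = Σ_{q ∈ Cone(p)} f(q) is the cone sum of f at p (this sum converging absolutely). -/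
/-- On a countable finitely certifiable poset there are Möbius-type integer
coefficients `μ`, zero at all but finitely many elements, such that for every
absolutely summable `f : P → ℂ` we have `Σ_p f(p) = Σ_p μ(p) f̂(p)`, where
`f̂(p) = Σ_{q ≥ p} f(q)` is the (absolutely convergent) cone sum of `f` at `p`. -/
theorem mobius_cone_sums (P : Type*) [PartialOrder P] [Countable P]
    (hP : FinitelyCertifiable P) :
    ∃ μ : P → ℤ, {p : P | μ p ≠ 0}.Finite ∧
      ∀ f : P → ℂ, Summable (fun p : P => ‖f p‖) →
        (∀ p : P, Summable fun q : Set.Ici p => ‖f q.1‖) ∧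
        ∑' p : P, f p = ∑' p : P, (μ p : ℂ) * ∑' q : Set.Ici p, f q.1 := by
  classical
  obtain ⟨hmax, hnoeth⟩ := hP
  rcases isEmpty_or_nonempty P with hE | hNE
  · refine ⟨0, by simp, fun f hf => ⟨fun p => isEmptyElim p, ?_⟩⟩
    rw [tsum_empty, tsum_empty]
  refine ?_
  obtain ⟨e, he⟩ := exists_surjective_nat P
  set Q : ℕ → Set P := fun n => ⋃ i ∈ Finset.range (n+1), Set.Ici (e i) with hQ
  have hup : ∀ n, IsUpperSet (Q n) := by
    intro n
    apply isUpperSet_iUnion₂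
    intro i _
    exact isUpperSet_Ici _
  have hmono : ∀ n, Q n ⊆ Q (n+1) := by
    intro n p hp
    simp only [Q, Set.mem_iUnion, Finset.mem_range] at *
    obtain ⟨i, hi, h⟩ := hp
    exact ⟨i, by omega, h⟩
  obtain ⟨N, hN⟩ := hnoeth Q hup hmono
  have hcover : ∀ q : P, ∃ i ∈ Finset.range (N+1), e i ≤ q := by
    intro q
    obtain ⟨k, rfl⟩ := he q
    have h1 : e k ∈ Q k := by
      simp only [Q, Set.mem_iUnion, Finset.mem_range]
      exact ⟨k, by omega, le_rfl⟩
    have h2 : Q k ⊆ Q (max N k) := by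
      have : ∀ a b, Q a ⊆ Q (a + b) := by
        intro a b; induction b with
        | zero => rfl
        | succ b ih => exact ih.trans (hmono _)
      have := this k (max N k - k)
      rwa [Nat.add_sub_cancel' (le_max_right N k)] at this
    rw [hN (max N k) N (le_max_left _ _) le_rfl] at h2
    have := h2 h1
    simp only [Q, Set.mem_iUnion, Set.mem_Ici] at this
    obtain ⟨i, hi, h⟩ := this
    exact ⟨i, hi, h⟩
  -- intersection of cones is a cone
  have h_inter : ∀ s : Finset ℕ, s.Nonempty → ∃ m : P, ∀ q : P, (∀ i ∈ s, e i ≤ q) ↔ m ≤ q := by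
    intro s hs
    induction hs using Finset.Nonempty.cons_induction with
    | singleton a => exact ⟨e a, by simp⟩
    | cons a t hat ht ih =>
      obtain ⟨mt, hmt⟩ := ih
      obtain ⟨m, hm⟩ := hmax (e a) mt
      refine ⟨m, fun q => ?_⟩
      have : q ∈ Set.Ici (e a) ∩ Set.Ici mt ↔ q ∈ Set.Ici m := by rw [hm]
      simp only [Set.mem_inter_iff, Set.mem_Ici] at this
      rw [← this, ← hmt q]
      simp [Finset.forall_mem_cons]
  choose! M hM using h_inter
  set 𝒮 : Finset (Finset ℕ) := (Finset.range (N+1)).powerset.erase ∅ with h𝒮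
  have mem𝒮 : ∀ s : Finset ℕ, s ∈ 𝒮 ↔ s.Nonempty ∧ s ⊆ Finset.range (N+1) := by
    intro s
    simp only [h𝒮, Finset.mem_erase, Finset.mem_powerset, Finset.nonempty_iff_ne_empty]
    try tauto
  set μ : P → ℤ := fun p => ∑ s ∈ 𝒮.filter (fun s => M s = p), (-1 : ℤ)^(s.card+1) with hμ
  set T : Finset P := 𝒮.image M with hT
  have hsupp : ∀ p : P, p ∉ T → μ p = 0 := by
    intro p hp
    rw [hμ]
    apply Finset.sum_eq_zero
    intro s hs
    exfalso
    rw [Finset.mem_filter] at hs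
    exact hp (hs.2 ▸ Finset.mem_image_of_mem M hs.1)
  -- key pointwise identity
  have key : ∀ q : P, ∑ p ∈ T, (μ p : ℂ) * (if p ≤ q then 1 else 0) = 1 := by
    intro q
    have step1 : ∑ p ∈ T, (μ p : ℂ) * (if p ≤ q then 1 else 0)
        = ∑ s ∈ 𝒮, (-1 : ℂ)^(s.card+1) * (if M s ≤ q then 1 else 0) := by
      rw [← Finset.sum_fiberwise_of_maps_to (g := M) (fun s hs => Finset.mem_image_of_mem M hs)]
      refine Finset.sum_congr rfl fun p _ => ?_
      rw [hμ]
      push_cast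
      rw [Finset.sum_mul]
      refine Finset.sum_congr rfl fun s hs => ?_
      rw [Finset.mem_filter] at hs
      rw [hs.2]
    rw [step1]
    set A : Finset ℕ := (Finset.range (N+1)).filter (fun i => e i ≤ q) with hA
    have hAne : A.Nonempty := by
      obtain ⟨i, hi, h⟩ := hcover q
      exact ⟨i, Finset.mem_filter.2 ⟨hi, h⟩⟩
    have hiff : ∀ s ∈ 𝒮, (M s ≤ q ↔ s ⊆ A) := by
      intro s hs
      rw [mem𝒮] at hs
      rw [← hM s hs.1 q]
      constructor
      · intro h i hi
        exact Finset.mem_filter.2 ⟨hs.2 hi, h i hi⟩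
      · intro h i hi
        exact (Finset.mem_filter.1 (h hi)).2
    have step2 : ∑ s ∈ 𝒮, (-1 : ℂ)^(s.card+1) * (if M s ≤ q then 1 else 0)
        = ∑ s ∈ A.powerset.erase ∅, (-1 : ℂ)^(s.card+1) := by
      rw [← Finset.sum_filter_add_sum_filter_not 𝒮 (fun s => M s ≤ q)]
      have h2 : ∑ s ∈ 𝒮.filter (fun s => ¬ M s ≤ q), (-1 : ℂ)^(s.card+1) * (if M s ≤ q then 1 else 0) = 0 := by
        apply Finset.sum_eq_zero
        intro s hs
        rw [Finset.mem_filter] at hs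
        simp [hs.2]
      rw [h2, add_zero]
      have hset : 𝒮.filter (fun s => M s ≤ q) = A.powerset.erase ∅ := by
        ext s
        simp only [Finset.mem_filter, Finset.mem_erase, Finset.mem_powerset]
        constructor
        · intro ⟨hs, hle⟩
          have := (hiff s hs).1 hle
          exact ⟨Finset.nonempty_iff_ne_empty.1 ((mem𝒮 s).1 hs).1, this⟩
        · intro ⟨hne, hsub⟩
          have hs𝒮 : s ∈ 𝒮 := (mem𝒮 s).2 ⟨Finset.nonempty_iff_ne_empty.2 hne,
            hsub.trans (Finset.filter_subset _ _)⟩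
          exact ⟨hs𝒮, (hiff s hs𝒮).2 hsub⟩
      rw [hset]
      refine Finset.sum_congr rfl fun s hs => ?_
      have hs𝒮 : s ∈ 𝒮 := by
        rw [Finset.mem_erase, Finset.mem_powerset] at hs
        exact (mem𝒮 s).2 ⟨Finset.nonempty_iff_ne_empty.2 hs.1,
          hs.2.trans (Finset.filter_subset _ _)⟩
      rw [if_pos ((hiff s hs𝒮).2 (Finset.mem_powerset.1 (Finset.mem_erase.1 hs).2)), mul_one]
    rw [step2]
    have hz : ∑ s ∈ A.powerset, (-1 : ℂ)^(s.card+1) = 0 := by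
      have := Finset.sum_powerset_neg_one_pow_card_of_nonempty hAne
      have : ((∑ m ∈ A.powerset, (-1 : ℤ) ^ m.card : ℤ) : ℂ) = 0 := by rw [this]; simp
      push_cast at this
      calc ∑ s ∈ A.powerset, (-1 : ℂ)^(s.card+1)
          = ∑ s ∈ A.powerset, (-1) * (-1 : ℂ)^(s.card) := by
            refine Finset.sum_congr rfl fun s _ => ?_; ring
        _ = (-1) * ∑ s ∈ A.powerset, (-1 : ℂ)^(s.card) := by rw [Finset.mul_sum]
        _ = 0 := by rw [this]; ring
    have hmem : (∅ : Finset ℕ) ∈ A.powerset := Finset.mem_powerset.2 (Finset.empty_subset _)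
    have := Finset.sum_erase_add A.powerset (fun s => (-1 : ℂ)^(s.card+1)) hmem
    rw [hz] at this
    simp only [Finset.card_empty, pow_one] at this
    linear_combination this
  -- assemble
  refine ⟨μ, Set.Finite.subset T.finite_toSet (fun p hp => ?_), fun f hf => ?_⟩
  · by_contra h
    exact hp (hsupp p h)
  have hf' : Summable f := hf.of_norm
  refine ⟨fun p => hf.subtype _, ?_⟩
  have hind : ∀ p : P, Summable fun q : P => (Set.Ici p).indicator f q :=
    fun p => hf'.indicator _
  have hRHS : ∑' p : P, (μ p : ℂ) * ∑' q : Set.Ici p, f q.1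
      = ∑ p ∈ T, (μ p : ℂ) * ∑' q : Set.Ici p, f q.1 := by
    refine tsum_eq_sum fun p hp => ?_
    rw [hsupp p hp]
    simp
  rw [hRHS]
  have hstep : ∑ p ∈ T, (μ p : ℂ) * ∑' q : Set.Ici p, f q.1
      = ∑ p ∈ T, ∑' q : P, (μ p : ℂ) * (Set.Ici p).indicator f q := by
    refine Finset.sum_congr rfl fun p _ => ?_
    rw [tsum_subtype (Set.Ici p) f, tsum_mul_left]
  rw [hstep]
  have hswap : ∑ p ∈ T, ∑' q : P, (μ p : ℂ) * (Set.Ici p).indicator f q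
      = ∑' q : P, ∑ p ∈ T, (μ p : ℂ) * (Set.Ici p).indicator f q := by
    refine (Summable.tsum_finsetSum fun p _ => ?_).symm
    exact (hind p).mul_left _
  rw [hswap]
  refine tsum_congr fun q => ?_
  have : ∀ p : P, (μ p : ℂ) * (Set.Ici p).indicator f q
      = ((μ p : ℂ) * (if p ≤ q then 1 else 0)) * f q := by
    intro p
    rw [Set.indicator_apply]
    simp only [Set.mem_Ici]
    split_ifs <;> ring
  rw [Finset.sum_congr rfl fun p _ => this p, ← Finset.sum_mul, key q, one_mul]
end

section
/- Let g₁, …, g_t be polyexponential functions with bases contained in a finite set L ⊆ ℂ, let m₁, …, m_t be positive integers, and let S be the least common multiple of m₁, …, m_t. Then the weighted convolution (g₁ * g₂ * ··· * g_t)_{m⃗}(k) = Σ g₁(k₁)···g_t(k_t), summed over all t-tuples of non-negative integers (k₁, …, k_t) with m₁k₁ + ··· + m_tk_t = k, is a mod-S polyexponential whose bases lie in the union over i = 1, …, t of the sets L^{S/m_i} = {ℓ^{S/m_i} : ℓ ∈ L}. -/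
/-- `g` is polyexponential with bases in the finite set `L`:
`g(k) = Σ_{c∈L} p_c(k) c^k` for some polynomials `p_c`. -/
def IsPolyexp (L : Finset ℂ) (g : ℕ → ℂ) : Prop :=
  ∃ p : ℂ → Polynomial ℂ, ∀ k : ℕ, g k = ∑ c ∈ L, (p c).eval (k : ℂ) * c ^ k

/-- `g : ℕ → ℂ` is a mod-`S` polyexponential of base `ℓ`: there are `K ∈ ℕ` and
polynomials `q₀, …, q_{S−1}` such that for every `k ≥ K`, writing `k = jS + i` with
`0 ≤ i ≤ S−1` (so `j = k / S` and `i = k % S`), one has `g(k) = q_i(j) ℓ^j`. -/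
def IsModPolyexp (S : ℕ) (ℓ : ℂ) (g : ℕ → ℂ) : Prop :=
  ∃ (K : ℕ) (q : ℕ → Polynomial ℂ), ∀ k : ℕ, K ≤ k →
    g k = (q (k % S)).eval ((k / S : ℕ) : ℂ) * ℓ ^ (k / S)

open Classical in
/-- The weighted convolution `(g₁ * ··· * g_t)_{m⃗}(k)`: the sum of `g₁(k₁)···g_t(k_t)`
over all `t`-tuples of non-negative integers with `m₁k₁ + ··· + m_tk_t = k`.
(When every `m i ≥ 1`, every such tuple has all entries at most `k`.) -/
noncomputable def weightedConv (t : ℕ) (g : Fin t → ℕ → ℂ) (m : Fin t → ℕ)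
    (k : ℕ) : ℂ :=
  ∑ v ∈ (Fintype.piFinset fun _ : Fin t => Finset.range (k + 1)).filter
      (fun v : Fin t → ℕ => ∑ i, m i * v i = k),
    ∏ i, g i (v i)

/-!
Pass to generating functions. A polyexponential with bases in `L` has generating function
`R / D` with `D` a product of factors `1 - ℓX`, `ℓ ∈ L`. Substituting `X ^ m` for `X` and
multiplying by the geometric sum of `ℓX ^ m` turns each factor into `1 - ℓ ^ (S / m) X ^ S`, and
the weighted convolution is the coefficient sequence of the product of the substituted series.
So its generating function is `R / D` with `D` a product of factors `1 - bX ^ S`,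
`b ∈ ⋃ᵢ L ^ (S / mᵢ)`. Removing one such factor at a time, the coefficients obey
`f (k + S) = b f k + f' (k + S)` with `f'` of the same kind, and on each residue class mod `S`
this recurrence is solved by polyexponentials: `r (x + 1) - a r x = w x` is solvable in
polynomials (by Bernoulli polynomials if `a = 1`; if `a ≠ 1` the operator is injective, hence
bijective, on polynomials of bounded degree).
-/

open Polynomial Filter
open scoped PowerSeries

theorem Polynomial.leadingCoeff_comp_X_add_one (r : ℂ[X]) :
    (r.comp (X + 1)).leadingCoeff = r.leadingCoeff := by
  rw [leadingCoeff_comp (by rw [← C_1, natDegree_X_add_C]; simp), ← C_1, leadingCoeff_X_add_C,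
    one_pow, mul_one]

theorem Polynomial.degree_comp_X_add_one (r : ℂ[X]) : (r.comp (X + 1)).degree = r.degree := by
  rcases eq_or_ne r 0 with rfl | hr
  · simp
  have hr' : r.comp (X + 1) ≠ 0 := by
    rwa [Ne, ← leadingCoeff_eq_zero, leadingCoeff_comp_X_add_one, leadingCoeff_eq_zero]
  rw [degree_eq_natDegree hr, degree_eq_natDegree hr', natDegree_comp, ← C_1, natDegree_X_add_C,
    mul_one]

theorem Polynomial.natDegree_comp_X_add_one_sub_lt {p : ℂ[X]} (h : p.comp (X + 1) - p ≠ 0) :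
    (p.comp (X + 1) - p).natDegree < p.natDegree := by
  have hp : p ≠ 0 := by rintro rfl; simp at h
  refine natDegree_lt_natDegree h ?_
  rw [← degree_comp_X_add_one p]
  refine degree_sub_lt_left (degree_comp_X_add_one p) ?_ (leadingCoeff_comp_X_add_one p)
  rw [Ne, ← leadingCoeff_eq_zero, leadingCoeff_comp_X_add_one]
  exact leadingCoeff_ne_zero.2 hp

theorem Polynomial.exists_comp_X_add_one_sub_eq (w : ℂ[X]) :
    ∃ r : ℂ[X], r.comp (X + 1) - r = w := by
  induction w using Polynomial.induction_on' with
  | add p q hp hq =>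
    obtain ⟨r, rfl⟩ := hp
    obtain ⟨s, rfl⟩ := hq
    exact ⟨r + s, by rw [add_comp]; ring⟩
  | monomial n a =>
    refine ⟨C (a / (n + 1)) * (bernoulli (n + 1)).map (algebraMap ℚ ℂ), ?_⟩
    have h := congrArg (map (algebraMap ℚ ℂ)) (bernoulli_comp_one_add_X (n + 1))
    simp only [map_comp, nsmul_eq_mul, Polynomial.map_add, Polynomial.map_mul,
      Polynomial.map_natCast, Polynomial.map_pow, map_X, Polynomial.map_one,
      add_tsub_cancel_right] at h
    have hC : C (a / (n + 1)) * ((n + 1 : ℕ) : ℂ[X]) = C a := by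
      rw [← C_eq_natCast, ← C_mul]
      congr 1
      field_simp
      push_cast
      ring
    rw [mul_comp, C_comp, add_comm X, h, ← C_mul_X_pow_eq_monomial]
    linear_combination X ^ n * hC

theorem Polynomial.exists_comp_X_add_one_sub_C_mul_eq_of_ne_one {a : ℂ} (ha : a ≠ 1) (w : ℂ[X]) :
    ∃ r : ℂ[X], r.comp (X + 1) - C a * r = w := by
  let T : ℂ[X] →ₗ[ℂ] ℂ[X] := (aeval (X + 1 : ℂ[X])).toLinearMap - a • LinearMap.id
  have hT : ∀ r, T r = r.comp (X + 1) - C a * r := fun r => by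
    simp [T, comp_eq_aeval, smul_eq_C_mul]
  have hdeg (r : ℂ[X]) : (T r).degree ≤ r.degree := by
    rw [hT, ← smul_eq_C_mul]
    exact (degree_sub_le _ _).trans (max_le (degree_comp_X_add_one r).le (degree_smul_le a r))
  have hinj : Function.Injective T := by
    refine (injective_iff_map_eq_zero T).2 fun r hr => ?_
    rw [hT, sub_eq_zero] at hr
    have hlead := congrArg leadingCoeff hr
    rw [leadingCoeff_comp_X_add_one, leadingCoeff_mul, leadingCoeff_C] at hlead
    have : (1 - a) * r.leadingCoeff = 0 := by linear_combination hlead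
    simpa [sub_ne_zero.2 ha.symm] using this
  let V := degreeLT ℂ (w.natDegree + 1)
  let T' : V →ₗ[ℂ] V := T.restrict fun r hr =>
    mem_degreeLT.2 ((hdeg r).trans_lt (mem_degreeLT.1 hr))
  have hsurj : Function.Surjective T' := LinearMap.injective_iff_surjective.1
    fun x y h => Subtype.ext (hinj (congrArg Subtype.val h))
  obtain ⟨r, hr⟩ := hsurj ⟨w, mem_degreeLT.2
    (degree_le_natDegree.trans_lt (by exact_mod_cast w.natDegree.lt_succ_self))⟩
  exact ⟨r, (hT r).symm.trans (congrArg Subtype.val hr)⟩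

theorem Polynomial.exists_comp_X_add_one_sub_C_mul_eq (a : ℂ) (w : ℂ[X]) :
    ∃ r : ℂ[X], r.comp (X + 1) - C a * r = w := by
  rcases eq_or_ne a 1 with rfl | ha
  · simpa using exists_comp_X_add_one_sub_eq w
  · exact exists_comp_X_add_one_sub_C_mul_eq_of_ne_one ha w

theorem exists_eval_mul_pow_succ_eq (b c : ℂ) (p : ℂ[X]) :
    ∃ r : ℂ[X], ∀ j : ℕ, r.eval ((j + 1 : ℕ) : ℂ) * c ^ (j + 1) =
      b * (r.eval (j : ℂ) * c ^ j) + p.eval ((j + 1 : ℕ) : ℂ) * c ^ (j + 1) := by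
  rcases eq_or_ne c 0 with rfl | hc
  · exact ⟨0, fun j => by simp⟩
  obtain ⟨r, hr⟩ := exists_comp_X_add_one_sub_C_mul_eq (b / c) (p.comp (X + 1))
  refine ⟨r, fun j => ?_⟩
  have h := congrArg (eval (j : ℂ)) hr
  simp only [eval_sub, eval_comp, eval_add, eval_X, eval_one, eval_mul, eval_C] at h
  push_cast
  rw [pow_succ]
  field_simp at h
  linear_combination c ^ j * h

def polyexpSpace (B : Finset ℂ) : Submodule ℂ (ℕ → ℂ) where
  carrier := {u | ∃ p : ℂ → ℂ[X], ∀ᶠ j in atTop, u j = ∑ c ∈ B, (p c).eval (j : ℂ) * c ^ j}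
  zero_mem' := ⟨0, by simp⟩
  add_mem' := by
    rintro u v ⟨p, hp⟩ ⟨q, hq⟩
    refine ⟨p + q, ?_⟩
    filter_upwards [hp, hq] with j hpj hqj
    simp [hpj, hqj, add_mul, Finset.sum_add_distrib]
  smul_mem' := by
    rintro a u ⟨p, hp⟩
    refine ⟨fun c => C a * p c, ?_⟩
    filter_upwards [hp] with j hj
    simp [hj, Finset.mul_sum, mul_assoc]

namespace polyexpSpace

variable {B : Finset ℂ} {b : ℂ} {u v w : ℕ → ℂ}

theorem mem_of_eventuallyEq (hu : u ∈ polyexpSpace B) (h : u =ᶠ[atTop] v) :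
    v ∈ polyexpSpace B := by
  obtain ⟨p, hp⟩ := hu
  exact ⟨p, h.symm.trans hp⟩

theorem mem_of_eventually_eq_zero (h : ∀ᶠ j in atTop, u j = 0) : u ∈ polyexpSpace B :=
  mem_of_eventuallyEq (zero_mem _) (h.mono fun _ hj => hj.symm)

theorem eval_mul_pow_mem {c : ℂ} (hc : c ∈ B) (r : ℂ[X]) :
    (fun j : ℕ => r.eval (j : ℂ) * c ^ j) ∈ polyexpSpace B := by
  classical
  refine ⟨fun c' => if c' = c then r else 0, .of_forall fun j => ?_⟩
  rw [Finset.sum_eq_single_of_mem c hc fun c' _ h => by simp [h]]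
  simp

theorem mem_of_succ_eq_mul (hb : b ∈ B) (h : ∀ᶠ j in atTop, v (j + 1) = b * v j) :
    v ∈ polyexpSpace B := by
  obtain ⟨J, hJ⟩ := eventually_atTop.1 h
  rcases eq_or_ne b 0 with rfl | hb0
  · refine mem_of_eventually_eq_zero ((eventually_ge_atTop (J + 1)).mono fun j hj => ?_)
    obtain ⟨i, rfl⟩ : ∃ i, j = i + 1 := ⟨j - 1, by omega⟩
    simpa using hJ i (by omega)
  have hgeom : ∀ j ≥ J, v j * b ^ J = v J * b ^ j := by
    intro j hj
    induction j, hj using Nat.le_induction with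
    | base => rfl
    | succ j hj ih => rw [hJ j hj, pow_succ]; linear_combination b * ih
  refine mem_of_eventuallyEq (eval_mul_pow_mem hb (C (v J / b ^ J)))
    ((eventually_ge_atTop J).mono fun j hj => ?_)
  simp only [eval_C]
  field_simp
  linear_combination -hgeom j hj

theorem mem_of_succ_eq (hb : b ∈ B) (hw : w ∈ polyexpSpace B)
    (h : ∀ᶠ j in atTop, u (j + 1) = b * u j + w (j + 1)) : u ∈ polyexpSpace B := by
  obtain ⟨p, hp⟩ := hw
  choose r hr using fun c => exists_eval_mul_pow_succ_eq b c (p c)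
  set v : ℕ → ℂ := fun j => ∑ c ∈ B, (r c).eval (j : ℂ) * c ^ j
  have hv : v ∈ polyexpSpace B := ⟨r, .of_forall fun _ => rfl⟩
  have hdiff : u - v ∈ polyexpSpace B := by
    refine mem_of_succ_eq_mul hb ?_
    filter_upwards [h, (tendsto_add_atTop_nat 1).eventually hp] with j hj hpj
    simp only [Pi.sub_apply, v, hr, Finset.sum_add_distrib, hj, hpj, ← Finset.mul_sum]
    ring
  simpa using add_mem hdiff hv

end polyexpSpace

def modPolyexpSpace (S : ℕ) (B : Finset ℂ) : Submodule ℂ (ℕ → ℂ) :=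
  ⨅ i : ℕ, (polyexpSpace B).comap (LinearMap.funLeft ℂ ℂ fun j => j * S + i)

namespace modPolyexpSpace

variable {S : ℕ} {B : Finset ℂ} {f f' : ℕ → ℂ}

theorem mem_iff :
    f ∈ modPolyexpSpace S B ↔ ∀ i, (fun j => f (j * S + i)) ∈ polyexpSpace B := by
  simp only [modPolyexpSpace, Submodule.mem_iInf, Submodule.mem_comap]
  rfl

theorem mem_of_eventually_eq_zero (hS : 0 < S) (h : ∀ᶠ k in atTop, f k = 0) :
    f ∈ modPolyexpSpace S B := by
  refine mem_iff.2 fun i => polyexpSpace.mem_of_eventually_eq_zero ?_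
  refine (tendsto_atTop_mono (fun j => ?_) tendsto_id).eventually h
  exact (Nat.le_mul_of_pos_right j hS).trans (Nat.le_add_right _ i)

theorem mem_of_add_eq {b : ℂ} (hb : b ∈ B) (hf' : f' ∈ modPolyexpSpace S B)
    (h : ∀ k, f (k + S) = b * f k + f' (k + S)) : f ∈ modPolyexpSpace S B :=
  mem_iff.2 fun i => polyexpSpace.mem_of_succ_eq hb (mem_iff.1 hf' i)
    (.of_forall fun j => by simpa only [add_mul, one_mul, add_right_comm] using h (j * S + i))

theorem exists_sum_isModPolyexp (hS : 0 < S) (hf : f ∈ modPolyexpSpace S B) {c₀ : ℂ}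
    (hc₀ : c₀ ∈ B) :
    ∃ F : ℂ → ℕ → ℂ, (∀ c ∈ B, IsModPolyexp S c (F c)) ∧ ∀ k, f k = ∑ c ∈ B, F c k := by
  classical
  choose p hp using mem_iff.1 hf
  obtain ⟨K, hK⟩ :=
    eventually_atTop.1 ((eventually_all_finset (Finset.range S)).2 fun i _ => hp i)
  let G : ℂ → ℕ → ℂ := fun c k => (p (k % S) c).eval ((k / S : ℕ) : ℂ) * c ^ (k / S)
  have hG (k : ℕ) (hk : K * S ≤ k) : f k = ∑ c ∈ B, G c k := by
    have := hK (k / S) ((Nat.le_div_iff_mul_le hS).2 hk) (k % S)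
      (Finset.mem_range.2 (Nat.mod_lt _ hS))
    dsimp only at this
    rwa [Nat.div_add_mod'] at this
  -- the discrepancy `f - ∑ G`, which vanishes for large `k`, is put into the summand of `c₀`
  refine ⟨fun c k => G c k + if c = c₀ then f k - ∑ c ∈ B, G c k else 0,
    fun c _ => ⟨K * S, fun i => p i c, fun k hk => ?_⟩, fun k => ?_⟩
  · simp [G, hG k hk]
  · simp [Finset.sum_add_distrib, hc₀]

end modPolyexpSpace

theorem PowerSeries.expand_coe {m : ℕ} (hm : m ≠ 0) (p : ℂ[X]) :
    PowerSeries.expand m hm (p : ℂ⟦X⟧) = (Polynomial.expand ℂ m p : ℂ⟦X⟧) := by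
  ext n
  rw [PowerSeries.coeff_expand, Polynomial.coeff_coe, Polynomial.coeff_coe,
    Polynomial.coeff_expand (Nat.pos_of_ne_zero hm)]

theorem PowerSeries.coeff_prod_eq_of_coeff_eq {R ι : Type*} [CommRing R] (s : Finset ι)
    {F G : ι → R⟦X⟧} {k : ℕ} (h : ∀ i ∈ s, ∀ n ≤ k, coeff n (F i) = coeff n (G i)) :
    coeff k (∏ i ∈ s, F i) = coeff k (∏ i ∈ s, G i) := by
  let I := Ideal.span {(X : R⟦X⟧) ^ (k + 1)}
  have hFG : ∀ i ∈ s, Ideal.Quotient.mk I (F i) = Ideal.Quotient.mk I (G i) := fun i hi =>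
    Ideal.Quotient.eq.2 <| Ideal.mem_span_singleton.2 <| X_pow_dvd_iff.2 fun n hn => by
      rw [map_sub, h i hi n (Nat.lt_succ_iff.1 hn), sub_self]
  have hprod : Ideal.Quotient.mk I (∏ i ∈ s, F i) = Ideal.Quotient.mk I (∏ i ∈ s, G i) := by
    rw [map_prod, map_prod]
    exact Finset.prod_congr rfl hFG
  have hdvd := Ideal.mem_span_singleton.1 (Ideal.Quotient.eq.1 hprod)
  simpa [sub_eq_zero] using X_pow_dvd_iff.1 hdvd k k.lt_succ_self

theorem weightedConv_eq_coeff_prod {t : ℕ} (g : Fin t → ℕ → ℂ) {m : Fin t → ℕ}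
    (hm : ∀ i, m i ≠ 0) (k : ℕ) :
    weightedConv t g m k =
      PowerSeries.coeff k (∏ i, PowerSeries.expand (m i) (hm i) (PowerSeries.mk (g i))) := by
  classical
  rw [PowerSeries.coeff_prod_eq_of_coeff_eq (G := fun i => ∑ a ∈ Finset.range (k + 1),
    PowerSeries.C (g i a) * PowerSeries.X ^ (m i * a)) _ fun i _ n hn => ?_]
  · rw [Finset.prod_univ_sum]
    simp_rw [Finset.prod_mul_distrib, ← map_prod, Finset.prod_pow_eq_pow_sum, map_sum,
      PowerSeries.coeff_C_mul_X_pow]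
    rw [weightedConv, Finset.sum_filter]
    simp_rw [eq_comm (a := k)]
  · rw [PowerSeries.coeff_expand, map_sum]
    simp_rw [PowerSeries.coeff_C_mul_X_pow]
    split_ifs with hdvd
    · obtain ⟨q, rfl⟩ := hdvd
      have hmi : 0 < m i := Nat.pos_of_ne_zero (hm i)
      have hq : q < k + 1 := Nat.lt_succ_of_le ((Nat.le_mul_of_pos_left q hmi).trans hn)
      rw [Nat.mul_div_cancel_left _ hmi, PowerSeries.coeff_mk,
        Finset.sum_eq_single_of_mem q (Finset.mem_range.2 hq)
          fun a _ ha => if_neg fun h => ha (Nat.eq_of_mul_eq_mul_left hmi h).symm, if_pos rfl]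
    · exact (Finset.sum_eq_zero fun a _ => if_neg fun h => hdvd ⟨a, h⟩).symm

def denominators (S : ℕ) (B : Finset ℂ) : Set ℂ[X] := (fun b => 1 - C b * X ^ S) '' B

def IsRationalWith (A : Set ℂ[X]) (F : ℂ⟦X⟧) : Prop :=
  ∃ D ∈ Submonoid.closure A, ∃ R : ℂ[X], (D : ℂ⟦X⟧) * F = R

namespace IsRationalWith

variable {A : Set ℂ[X]} {F G : ℂ⟦X⟧}

theorem coe (R : ℂ[X]) : IsRationalWith A R := ⟨1, one_mem _, R, by simp⟩

theorem mul (hF : IsRationalWith A F) (hG : IsRationalWith A G) : IsRationalWith A (F * G) := by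
  obtain ⟨D, hD, R, hR⟩ := hF
  obtain ⟨E, hE, T, hT⟩ := hG
  exact ⟨D * E, mul_mem hD hE, R * T, by push_cast; rw [← hR, ← hT]; ring⟩

theorem add (hF : IsRationalWith A F) (hG : IsRationalWith A G) : IsRationalWith A (F + G) := by
  obtain ⟨D, hD, R, hR⟩ := hF
  obtain ⟨E, hE, T, hT⟩ := hG
  exact ⟨D * E, mul_mem hD hE, E * R + D * T, by push_cast; rw [← hR, ← hT]; ring⟩

theorem of_mul_left {a : ℂ[X]} (ha : a ∈ A) (h : IsRationalWith A (a * F)) :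
    IsRationalWith A F := by
  obtain ⟨D, hD, R, hR⟩ := h
  exact ⟨D * a, mul_mem hD (Submonoid.subset_closure ha), R, by push_cast; rw [← hR]; ring⟩

theorem expand {A' : Set ℂ[X]} {m : ℕ} (hm : m ≠ 0) (h : IsRationalWith A F)
    (hA : ∀ a ∈ A, ∃ E : ℂ[X], Polynomial.expand ℂ m a * E ∈ Submonoid.closure A') :
    IsRationalWith A' (PowerSeries.expand m hm F) := by
  have hexp (D : ℂ[X]) (hD : D ∈ Submonoid.closure A) :
      ∃ E : ℂ[X], Polynomial.expand ℂ m D * E ∈ Submonoid.closure A' := by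
    induction hD using Submonoid.closure_induction with
    | mem a ha => exact hA a ha
    | one => exact ⟨1, by simp [one_mem]⟩
    | mul x y _ _ hx hy =>
      obtain ⟨E₁, hE₁⟩ := hx
      obtain ⟨E₂, hE₂⟩ := hy
      exact ⟨E₁ * E₂, by simpa only [map_mul, mul_mul_mul_comm] using mul_mem hE₁ hE₂⟩
  obtain ⟨D, hD, R, hR⟩ := h
  obtain ⟨E, hE⟩ := hexp D hD
  refine ⟨_, hE, E * Polynomial.expand ℂ m R, ?_⟩
  rw [Polynomial.coe_mul, Polynomial.coe_mul, ← PowerSeries.expand_coe hm,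
    ← PowerSeries.expand_coe hm, ← hR, map_mul]
  ring

end IsRationalWith

theorem isRationalWith_mk_eval_mul_pow {A : Set ℂ[X]} {ℓ : ℂ} (hℓ : 1 - C ℓ * X ∈ A)
    (p : ℂ[X]) : IsRationalWith A (PowerSeries.mk fun k => p.eval (k : ℂ) * ℓ ^ k) := by
  induction hn : p.natDegree using Nat.strong_induction_on generalizing p with
  | _ n ih =>
  set q := p.comp (X + 1) - p
  have key : ((1 - C ℓ * X : ℂ[X]) : ℂ⟦X⟧) * PowerSeries.mk (fun k => p.eval (k : ℂ) * ℓ ^ k) =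
      ((C (p.eval 0) : ℂ[X]) : ℂ⟦X⟧) +
        ((C ℓ * X : ℂ[X]) : ℂ⟦X⟧) * PowerSeries.mk (fun k => q.eval (k : ℂ) * ℓ ^ k) := by
    ext (_ | k)
    · simp
    · simp [q, sub_mul, mul_assoc, PowerSeries.coeff_succ_X_mul]
      ring
  refine .of_mul_left hℓ ?_
  rw [key]
  refine (IsRationalWith.coe _).add ((IsRationalWith.coe _).mul ?_)
  by_cases hq : q = 0
  · have hzero : PowerSeries.mk (fun k => q.eval (k : ℂ) * ℓ ^ k) = 0 := by ext; simp [hq]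
    simpa [hzero] using IsRationalWith.coe (A := A) 0
  · exact ih _ (hn ▸ natDegree_comp_X_add_one_sub_lt hq) q rfl

theorem IsPolyexp.isRationalWith {L : Finset ℂ} {g : ℕ → ℂ} (hg : IsPolyexp L g) :
    IsRationalWith (denominators 1 L) (PowerSeries.mk g) := by
  obtain ⟨p, hp⟩ := hg
  have hsum : PowerSeries.mk g = ∑ c ∈ L, PowerSeries.mk fun k => (p c).eval (k : ℂ) * c ^ k := by
    ext k
    simp [hp, map_sum]
  rw [hsum]
  refine Finset.sum_induction _ _ (fun _ _ => IsRationalWith.add) ?_ fun c hc => ?_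
  · simpa using IsRationalWith.coe (A := denominators 1 L) 0
  · exact isRationalWith_mk_eval_mul_pow (show 1 - C c * X ∈ denominators 1 L from
      ⟨c, hc, by rw [pow_one]⟩) _

theorem exists_expand_mul_mem_closure_denominators {S m : ℕ} (hmS : m ∣ S) {L B : Finset ℂ}
    (hLB : ∀ ℓ ∈ L, ℓ ^ (S / m) ∈ B) :
    ∀ a ∈ denominators 1 L, ∃ E : ℂ[X],
      Polynomial.expand ℂ m a * E ∈ Submonoid.closure (denominators S B) := by
  rintro _ ⟨ℓ, hℓ, rfl⟩
  refine ⟨∑ i ∈ Finset.range (S / m), (C ℓ * X ^ m) ^ i,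
    Submonoid.subset_closure ⟨_, hLB ℓ hℓ, ?_⟩⟩
  simp only [map_sub, map_one, map_mul, expand_C, map_pow, expand_X, pow_one]
  rw [mul_neg_geom_sum, mul_pow, ← pow_mul, Nat.mul_div_cancel' hmS]

theorem IsRationalWith.mem_modPolyexpSpace {S : ℕ} (hS : 0 < S) {B : Finset ℂ} {f : ℕ → ℂ}
    (h : IsRationalWith (denominators S B) (PowerSeries.mk f)) : f ∈ modPolyexpSpace S B := by
  obtain ⟨D, hD, R, hR⟩ := h
  induction hD using Submonoid.closure_induction_left generalizing f R with
  | one =>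
    refine modPolyexpSpace.mem_of_eventually_eq_zero hS
      ((eventually_gt_atTop R.natDegree).mono fun k hk => ?_)
    simpa [coeff_eq_zero_of_natDegree_lt hk] using congrArg (PowerSeries.coeff k) hR
  | mul_left a ha D hD ih =>
    obtain ⟨b, hb, rfl⟩ := ha
    let F' := ((1 - C b * X ^ S : ℂ[X]) : ℂ⟦X⟧) * PowerSeries.mk f
    refine modPolyexpSpace.mem_of_add_eq hb (f' := fun k => PowerSeries.coeff k F')
      (ih (R := R) ?_) fun k => ?_
    · have hF' : PowerSeries.mk (fun k => PowerSeries.coeff k F') = F' := by ext; simp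
      rw [hF', ← mul_assoc, ← Polynomial.coe_mul, mul_comm D]
      exact hR
    · simp [F', sub_mul, mul_assoc, PowerSeries.coeff_X_pow_mul']

theorem weightedConv_mem_modPolyexpSpace {t : ℕ} {L : Finset ℂ} {g : Fin t → ℕ → ℂ}
    (hg : ∀ i, IsPolyexp L (g i)) {m : Fin t → ℕ} (hm : ∀ i, m i ≠ 0) {S : ℕ} (hS : 0 < S)
    (hmS : ∀ i, m i ∣ S) {B : Finset ℂ} (hLB : ∀ i, ∀ ℓ ∈ L, ℓ ^ (S / m i) ∈ B) :
    weightedConv t g m ∈ modPolyexpSpace S B := by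
  refine IsRationalWith.mem_modPolyexpSpace hS ?_
  have hgf : PowerSeries.mk (weightedConv t g m) =
      ∏ i, PowerSeries.expand (m i) (hm i) (PowerSeries.mk (g i)) :=
    PowerSeries.ext fun k => by rw [PowerSeries.coeff_mk, weightedConv_eq_coeff_prod g hm]
  rw [hgf]
  refine Finset.prod_induction _ _ (fun _ _ => IsRationalWith.mul) ?_ fun i _ =>
    (hg i).isRationalWith.expand (hm i)
      (exists_expand_mul_mem_closure_denominators (hmS i) (hLB i))
  simpa using IsRationalWith.coe (A := denominators S B) 1

/-- Let `g₁, …, g_t` be polyexponentials with bases in `L`, let `m₁, …, m_t` be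
positive integers and `S` their least common multiple.  Then the weighted
convolution `(g₁ * ··· * g_t)_{m⃗}` is a mod-`S` polyexponential (a finite sum of
mod-`S` polyexponentials) whose bases lie in `⋃_i L^{S/m_i}`. -/
theorem weightedConv_modPolyexp (t : ℕ) (ht : 0 < t) (L : Finset ℂ)
    (g : Fin t → ℕ → ℂ) (hg : ∀ i, IsPolyexp L (g i))
    (m : Fin t → ℕ) (hm : ∀ i, 0 < m i) (S : ℕ) (hS : S = Finset.univ.lcm m) :
    ∃ (n : ℕ) (b : Fin n → ℂ) (f : Fin n → ℕ → ℂ),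
      (∀ j, ∃ i : Fin t, ∃ ℓ ∈ L, b j = ℓ ^ (S / m i)) ∧
      (∀ j, IsModPolyexp S (b j) (f j)) ∧
      ∀ k : ℕ, weightedConv t g m k = ∑ j, f j k := by
  classical
  have hm0 (i : Fin t) : m i ≠ 0 := (hm i).ne'
  have hS0 : 0 < S := hS ▸ Nat.pos_of_ne_zero (by simpa [Finset.lcm_eq_zero_iff] using hm0)
  rcases L.eq_empty_or_nonempty with rfl | ⟨ℓ₀, hℓ₀⟩
  · obtain ⟨p, hp⟩ := hg ⟨0, ht⟩
    have hg0 : g ⟨0, ht⟩ = 0 := funext fun k => by simpa using hp k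
    refine ⟨0, finZeroElim, finZeroElim, finZeroElim, finZeroElim, fun k => ?_⟩
    rw [Finset.univ_eq_empty, Finset.sum_empty]
    exact Finset.sum_eq_zero fun v _ =>
      Finset.prod_eq_zero (Finset.mem_univ ⟨0, ht⟩) (by rw [hg0, Pi.zero_apply])
  let B : Finset ℂ := Finset.univ.biUnion fun i => L.image (· ^ (S / m i))
  have hB {b : ℂ} : b ∈ B ↔ ∃ i : Fin t, ∃ ℓ ∈ L, b = ℓ ^ (S / m i) := by simp [B, eq_comm]
  have hconv := weightedConv_mem_modPolyexpSpace hg hm0 hS0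
    (fun i => hS ▸ Finset.dvd_lcm (Finset.mem_univ i)) fun i ℓ hℓ => hB.2 ⟨i, ℓ, hℓ, rfl⟩
  obtain ⟨F, hF, hsum⟩ := modPolyexpSpace.exists_sum_isModPolyexp hS0 hconv
    (hB.2 ⟨⟨0, ht⟩, ℓ₀, hℓ₀, rfl⟩)
  refine ⟨B.card, fun j => B.equivFin.symm j, fun j => F (B.equivFin.symm j),
    fun j => hB.1 (B.equivFin.symm j).2, fun j => hF _ (B.equivFin.symm j).2, fun k => ?_⟩
  rw [hsum k, ← Finset.sum_coe_sort B]
  exact (B.equivFin.symm.sum_comp fun c => F c k).symm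
end
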